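/- Discrete Skorokhod problem with oblique reflection (self-consistency of the regulator): Let (Y_k)_{k≥0}, (L_k)_{k≥0}, (φ_k)_{k≥0} be real sequences and (R_k)_{k≥0} a real sequence (representing ∑_j ∫ Q^{ij} dL^j up to time k) such that: L_0 = 0, L is non-decreasing with increments η_k = L_{k+1} − L_k ≥ 0, φ_k = Y_k + L_k − R_k ≥ 0 for all k, and η_{k−1} > 0 implies φ_k = 0. Then L_k = max_{0 ≤ l ≤ k} (R_l − Y_l)_+ for every k. -/

import Mathlib

/-!
Write `Z = R - Y`. Nonnegativity of `φ` says `Z ≤ L`, and complementarity says that whenever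
`L` jumps it jumps exactly onto `Z`. Hence `L (k + 1) = max (L k) (Z (k + 1))₊` at every step
(if `L` is flat, `Z (k + 1) ≤ L (k + 1) = L k`), and with `L 0 = 0` this recursion is solved by
the running maximum of `Z₊`.
-/

theorem eq_partialSups_of_eq_sup_succ {α : Type*} [SemilatticeSup α] {f g : ℕ → α}
    (h0 : f 0 = g 0) (hsucc : ∀ k, f (k + 1) = f k ⊔ g (k + 1)) (k : ℕ) :
    f k = partialSups g k := by
  induction k with
  | zero => rw [h0, partialSups_zero]
  | succ k ih => rw [hsucc, ih]; exact (partialSups_succ g k).symm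

theorem regulator_succ_eq_sup_posPart {L Z : ℕ → ℝ} {k : ℕ} (hnonneg : 0 ≤ L k)
    (hmono : L k ≤ L (k + 1)) (hdom : Z (k + 1) ≤ L (k + 1))
    (hjump : L k < L (k + 1) → L (k + 1) = Z (k + 1)) :
    L (k + 1) = L k ⊔ max (Z (k + 1)) 0 := by
  rcases hmono.eq_or_lt with hflat | hlt
  · rw [← hflat] at hdom ⊢
    exact (sup_eq_left.mpr (max_le hdom hnonneg)).symm
  · have hZ := hjump hlt
    rw [sup_eq_right.mpr (hlt.le.trans (le_max_of_le_left hZ.le)), max_eq_left (by linarith)]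
    exact hZ

/-- Discrete Skorokhod problem with oblique reflection: the regulator `L` with the
complementarity condition admits the representation `L_k = max_{0 ≤ l ≤ k} (R_l − Y_l)₊`. -/
theorem discrete_oblique_skorokhod_formula (Y L φ R : ℕ → ℝ)
    (hL0 : L 0 = 0)
    (hmono : ∀ k, L k ≤ L (k + 1))
    (hφ : ∀ k, φ k = Y k + L k - R k)
    (hφpos : ∀ k, 0 ≤ φ k)
    (hcomp : ∀ k, L k < L (k + 1) → φ (k + 1) = 0) :
    ∀ k, L k = (Finset.range (k + 1)).sup' Finset.nonempty_range_add_one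
      (fun l => max (R l - Y l) 0) := by
  have hdom : ∀ k, R k - Y k ≤ L k := fun k => by linarith [hφ k, hφpos k]
  have hjump : ∀ k, L k < L (k + 1) → L (k + 1) = R (k + 1) - Y (k + 1) :=
    fun k hlt => by linarith [hφ (k + 1), hcomp k hlt]
  have hnonneg : ∀ k, 0 ≤ L k := fun k => hL0 ▸ monotone_nat_of_le_succ hmono (Nat.zero_le k)
  have hstart : L 0 = max (R 0 - Y 0) 0 := by
    rw [hL0, max_eq_right (hL0 ▸ hdom 0)]
  intro k
  rw [← partialSups_eq_sup'_range]
  exact eq_partialSups_of_eq_sup_succ hstart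
    (fun k => regulator_succ_eq_sup_posPart (Z := fun l => R l - Y l)
      (hnonneg k) (hmono k) (hdom (k + 1)) (hjump k)) k
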